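/- If an n-partite orthogonal product basis S of ℂ^{d₁}⊗...⊗ℂ^{dₙ} contains a product state |v₁⟩⊗...⊗|vₙ⟩ whose first factor |v₁⟩ appears with multiplicity exactly d₂⋯dₙ (counting proportional copies), then S is A₁-reducible: every other state of S has first factor orthogonal to |v₁⟩. -/

import Mathlib

/-!
The `d₂⋯dₙ` states whose first factor is proportional to `v₁` have mutually non-orthogonal
first factors, so their tails `v₂ ⊗ ⋯ ⊗ vₙ` are mutually orthogonal; being nonzero and
`d₂⋯dₙ` in number, they form an orthogonal basis of `ℂ^{d₂} ⊗ ⋯ ⊗ ℂ^{dₙ}`. If another state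
had first factor not orthogonal to `v₁`, its (nonzero) tail would be orthogonal to that
whole basis, which is impossible.
-/

open scoped ComplexInnerProductSpace Matrix
noncomputable section
/-- The state space of an `n`-partite system with local dimensions `d i`,
modelling `ℂ^{d 0} ⊗ ... ⊗ ℂ^{d (n-1)}`. -/
abbrev GState {n : ℕ} (d : Fin n → ℕ) := EuclideanSpace ℂ (∀ i, Fin (d i))
/-- The product state `v 0 ⊗ v 1 ⊗ ... ⊗ v (n-1)`. -/
def prodState {n : ℕ} (d : Fin n → ℕ) (v : ∀ i, EuclideanSpace ℂ (Fin (d i))) : GState d :=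
  WithLp.toLp 2 fun x => ∏ i, v i (x i)
/-- A family of product states (given by their local factors `a j`) is reducible at
party `p` if the states split into two nonempty groups whose `p`-th factors are
mutually orthogonal. -/
def ReducibleAt {n : ℕ} {d : Fin n → ℕ} {J : Type}
    (a : J → ∀ i, EuclideanSpace ℂ (Fin (d i))) (p : Fin n) : Prop :=
  ∃ T : Set J, T.Nonempty ∧ Tᶜ.Nonempty ∧ ∀ j ∈ T, ∀ k ∈ Tᶜ, ⟪a j p, a k p⟫ = 0

open scoped InnerProductSpace

section InnerProductSpace

variable {𝕜 E : Type*} [RCLike 𝕜] [NormedAddCommGroup E] [InnerProductSpace 𝕜 E]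

theorem inner_ne_zero_of_eq_smul_left {x y z : E} {c : 𝕜} (hc : c ≠ 0) (hx : x = c • z)
    (hz : ⟪z, y⟫_𝕜 ≠ 0) : ⟪x, y⟫_𝕜 ≠ 0 := by
  rw [hx, inner_smul_left]
  exact mul_ne_zero ((map_ne_zero _).2 hc) hz

theorem eq_zero_of_forall_inner_eq_zero_of_card_eq_finrank {ι : Type*} [Fintype ι]
    [FiniteDimensional 𝕜 E] {v : ι → E} (hv : ∀ i, v i ≠ 0)
    (hortho : Pairwise fun i j => ⟪v i, v j⟫_𝕜 = 0) (hcard : Fintype.card ι = Module.finrank 𝕜 E)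
    {w : E} (hw : ∀ i, ⟪v i, w⟫_𝕜 = 0) : w = 0 := by
  have hspan : Submodule.span 𝕜 (Set.range v) = ⊤ :=
    (linearIndependent_of_ne_zero_of_inner_eq_zero hv hortho).span_eq_top_of_card_eq_finrank' hcard
  have hle : Submodule.span 𝕜 (Set.range v) ≤ (𝕜 ∙ w)ᗮ := by
    rw [Submodule.span_le]
    rintro _ ⟨i, rfl⟩
    exact Submodule.mem_orthogonal_singleton_iff_inner_left.2 (hw i)
  rw [hspan, top_le_iff, Submodule.orthogonal_eq_top_iff, Submodule.span_singleton_eq_bot] at hle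
  exact hle

end InnerProductSpace

theorem inner_prodState {n : ℕ} (d : Fin n → ℕ) (u v : ∀ i, EuclideanSpace ℂ (Fin (d i))) :
    ⟪prodState d u, prodState d v⟫ = ∏ i, ⟪u i, v i⟫ := by
  classical
  simp only [PiLp.inner_apply, RCLike.inner_apply, prodState]
  rw [Fintype.prod_sum fun i y => v i y * starRingEnd ℂ (u i y)]
  congr 1 with x
  rw [map_prod, Finset.prod_mul_distrib]

theorem prodState_ne_zero {n : ℕ} (d : Fin n → ℕ) {v : ∀ i, EuclideanSpace ℂ (Fin (d i))}
    (hv : ∀ i, v i ≠ 0) : prodState d v ≠ 0 := by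
  have hx : ∀ i, ∃ y, v i y ≠ 0 := fun i => by
    by_contra! h
    exact hv i (by ext y; simp [h y])
  choose x hx using hx
  intro h
  have hx0 : ∏ i, v i (x i) = 0 := congrArg (fun s : GState d => s x) h
  exact Finset.prod_ne_zero_iff.2 (fun i _ => hx i) hx0

theorem inner_prodState_eq_mul_tail {n : ℕ} (d : Fin (n + 1) → ℕ)
    (u v : ∀ i, EuclideanSpace ℂ (Fin (d i))) :
    ⟪prodState d u, prodState d v⟫ =
      ⟪u 0, v 0⟫ * ⟪prodState (fun i => d i.succ) (fun i => u i.succ),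
        prodState (fun i => d i.succ) (fun i => v i.succ)⟫ := by
  rw [inner_prodState, inner_prodState, Fin.prod_univ_succ]

theorem inner_tail_eq_zero_of_inner_prodState_eq_zero {n : ℕ} {d : Fin (n + 1) → ℕ}
    {u v : ∀ i, EuclideanSpace ℂ (Fin (d i))} (h : ⟪prodState d u, prodState d v⟫ = 0)
    (h0 : ⟪u 0, v 0⟫ ≠ 0) :
    ⟪prodState (fun i => d i.succ) (fun i => u i.succ),
      prodState (fun i => d i.succ) (fun i => v i.succ)⟫ = 0 := by
  rw [inner_prodState_eq_mul_tail] at h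
  exact (mul_eq_zero.1 h).resolve_left h0

theorem full_multiplicity_implies_reducible_general
    {n : ℕ} {d : Fin (n + 1) → ℕ}
    (a : Fin (∏ i, d i) → ∀ i, EuclideanSpace ℂ (Fin (d i)))
    (hnz : ∀ j i, a j i ≠ 0)
    (horth : ∀ j k, j ≠ k → ⟪prodState d (a j), prodState d (a k)⟫ = 0)
    (j₀ : Fin (∏ i, d i))
    (hmult : Nat.card {k : Fin (∏ i, d i) // ∃ c : ℂ, c ≠ 0 ∧ a k 0 = c • a j₀ 0}
      = ∏ i : Fin n, d i.succ) :
    ∀ k, (∀ c : ℂ, c ≠ 0 → a k 0 ≠ c • a j₀ 0) → ⟪a j₀ 0, a k 0⟫ = 0 := by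
  classical
  intro k hk
  by_contra hk₀
  let T := {k : Fin (∏ i, d i) // ∃ c : ℂ, c ≠ 0 ∧ a k 0 = c • a j₀ 0}
  let tail (j : Fin (∏ i, d i)) := prodState (fun i => d i.succ) (fun i => a j i.succ)
  have hfirst (t : T) {m} (hm : ⟪a j₀ 0, a m 0⟫ ≠ 0) : ⟪a t.1 0, a m 0⟫ ≠ 0 := by
    obtain ⟨c, hc, hct⟩ := t.2
    exact inner_ne_zero_of_eq_smul_left hc hct hm
  have hT_ne (t : T) : t.1 ≠ k := fun h => by
    obtain ⟨c, hc, hct⟩ := t.2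
    exact hk c hc (h ▸ hct)
  have hj₀ (t : T) : ⟪a j₀ 0, a t.1 0⟫ ≠ 0 := by
    obtain ⟨c, hc, hct⟩ := t.2
    rw [hct, inner_smul_right]
    exact mul_ne_zero hc (inner_self_ne_zero.2 (hnz j₀ 0))
  have hcard : Fintype.card T = Module.finrank ℂ (GState fun i : Fin n => d i.succ) := by
    rw [finrank_euclideanSpace, Fintype.card_pi, ← Nat.card_eq_fintype_card, hmult]
    simp
  refine prodState_ne_zero _ (fun i => hnz k i.succ) <|
    eq_zero_of_forall_inner_eq_zero_of_card_eq_finrank (v := fun t : T => tail t.1)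
      (fun t => prodState_ne_zero _ fun i => hnz t.1 i.succ) (fun s t hst => ?_) hcard
      (fun t => ?_)
  · exact inner_tail_eq_zero_of_inner_prodState_eq_zero
      (horth s.1 t.1 fun h => hst (Subtype.ext h)) (hfirst s (hj₀ t))
  · exact inner_tail_eq_zero_of_inner_prodState_eq_zero
      (horth t.1 k (hT_ne t)) (hfirst t hk₀)

/-- If in an `n`-partite OPB some first factor `a j₀ 0` occurs with
multiplicity exactly `d₂⋯dₙ` (counting proportional copies), then the OPB is
`A₁`-reducible: every state whose first factor is not proportional to `a j₀ 0` has
first factor orthogonal to it. -/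
theorem full_multiplicity_implies_reducible
    {n : ℕ} {d : Fin (n + 1) → ℕ}
    (a : Fin (∏ i, d i) → ∀ i, EuclideanSpace ℂ (Fin (d i)))
    (hnz : ∀ j i, a j i ≠ 0)
    (horth : ∀ j k, j ≠ k → ⟪prodState d (a j), prodState d (a k)⟫ = 0)
    (hspan : Submodule.span ℂ (Set.range fun j => prodState d (a j)) = ⊤)
    (j₀ : Fin (∏ i, d i))
    (hmult : Nat.card {k : Fin (∏ i, d i) // ∃ c : ℂ, c ≠ 0 ∧ a k 0 = c • a j₀ 0}
      = ∏ i : Fin n, d i.succ) :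
    ∀ k, (∀ c : ℂ, c ≠ 0 → a k 0 ≠ c • a j₀ 0) → ⟪a j₀ 0, a k 0⟫ = 0 :=
  full_multiplicity_implies_reducible_general a hnz horth j₀ hmult
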